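/- Let $n \ge 3$, $d \ge 2$, $l \in \{2,\dots,d\}$, $k \in \{3,\dots,n\}$, and let $X \in \mathbb{R}^{n \times d}$ be the Case-1 matrix with rows $X_1 = -\tfrac{1}{\sqrt{2}} e_1 + \tfrac{1}{\sqrt{2}} e_l$, $X_k = e_1$, and $X_i = \tfrac{1}{\sqrt{2}} e_1 + \tfrac{1}{\sqrt{2}} e_l$ for all $i \in \{2,\dots,n\} \setminus \{k\}$. Then $\inf_{w \in \mathbb{R}^d} \max_{i \in \{1,\dots,n\}} \|w - X_i\|^2 = \tfrac{2+\sqrt{2}}{4}$, and the infimum is attained at $w = \left(\tfrac{1}{2} - \tfrac{\sqrt{2}}{4}\right) e_1 + \tfrac{\sqrt{2}}{4} e_l$. -/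

import Mathlib

lemma norm_comb {d : ℕ} (i j : Fin d) (hij : i ≠ j) (α β : ℝ) :
    ‖α • EuclideanSpace.single i (1:ℝ) + β • EuclideanSpace.single j (1:ℝ)‖ ^ 2
      = α ^ 2 + β ^ 2 := by
  rw [norm_add_sq_real, real_inner_smul_left, real_inner_smul_right,
    EuclideanSpace.inner_single_left]
  simp [EuclideanSpace.single_apply, hij.symm, norm_smul, EuclideanSpace.norm_single,
    mul_pow, abs_pow, sq_abs]

lemma aux_sq (s x y T : ℝ) (hx : 0 ≤ x) (hy : 0 ≤ y) (hT : 0 ≤ T)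
    (h2 : T ^ 2 = 2 + s) (h3 : T ≤ x + y) : (2 + s) / 2 ≤ x ^ 2 + y ^ 2 := by
  nlinarith [pow_le_pow_left₀ hT h3 2, sq_nonneg (x - y)]

/-- The squared radius of the minimum enclosing ball of the Case-1 instance is
`(2+√2)/4`, attained at the center `w = (1/2 - √2/4) e₁ + (√2/4) e_l`. -/
theorem case1_meb_value (n d : ℕ) (hn : 3 ≤ n) (hd : 2 ≤ d)
    (l : Fin d) (hl : (l : ℕ) ≠ 0)
    (k : Fin n) (hk : 2 ≤ (k : ℕ))
    (X : Fin n → EuclideanSpace ℝ (Fin d))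
    (hX1 : ∀ i : Fin n, (i : ℕ) = 0 →
      X i = -((Real.sqrt 2)⁻¹ • EuclideanSpace.single (⟨0, by omega⟩ : Fin d) (1 : ℝ))
        + (Real.sqrt 2)⁻¹ • EuclideanSpace.single l (1 : ℝ))
    (hXk : X k = EuclideanSpace.single (⟨0, by omega⟩ : Fin d) (1 : ℝ))
    (hXi : ∀ i : Fin n, (i : ℕ) ≠ 0 → i ≠ k →
      X i = (Real.sqrt 2)⁻¹ • EuclideanSpace.single (⟨0, by omega⟩ : Fin d) (1 : ℝ)
        + (Real.sqrt 2)⁻¹ • EuclideanSpace.single l (1 : ℝ)) :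
    (⨆ i : Fin n,
        ‖(1 / 2 - Real.sqrt 2 / 4) • EuclideanSpace.single (⟨0, by omega⟩ : Fin d) (1 : ℝ)
            + (Real.sqrt 2 / 4) • EuclideanSpace.single l (1 : ℝ) - X i‖ ^ 2)
        = (2 + Real.sqrt 2) / 4
      ∧ ∀ w : EuclideanSpace ℝ (Fin d),
          (⨆ i : Fin n, ‖w - X i‖ ^ 2) ≥ (2 + Real.sqrt 2) / 4 := by
  have hs2 : Real.sqrt 2 ^ 2 = 2 := Real.sq_sqrt (by norm_num)
  have hs0 : (0:ℝ) < Real.sqrt 2 := Real.sqrt_pos.mpr (by norm_num)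
  set s := Real.sqrt 2 with hsdef
  have hinv : s⁻¹ = s / 2 := by
    rw [eq_div_iff (by norm_num)]
    field_simp
    nlinarith
  have hi0l : (⟨0, by omega⟩ : Fin d) ≠ l := by
    intro h
    exact hl (by rw [← h])
  have hne : Nonempty (Fin n) := ⟨⟨0, by omega⟩⟩
  set i0 : Fin n := ⟨0, by omega⟩ with hi0def
  constructor
  · -- supremum value at the center
    set w : EuclideanSpace ℝ (Fin d) :=
      (1 / 2 - s / 4) • EuclideanSpace.single (⟨0, by omega⟩ : Fin d) (1 : ℝ)
        + (s / 4) • EuclideanSpace.single l (1 : ℝ) with hwdef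
    have hval : ∀ i : Fin n, ‖w - X i‖ ^ 2 ≤ (2 + s) / 4 ∧
        ((i : ℕ) = 0 → ‖w - X i‖ ^ 2 = (2 + s) / 4) := by
      intro i
      by_cases hi : (i : ℕ) = 0
      · have hrw : w - X i = (1/2 - s/4 + s⁻¹) • EuclideanSpace.single (⟨0, by omega⟩ : Fin d) (1:ℝ)
            + (s/4 - s⁻¹) • EuclideanSpace.single l (1:ℝ) := by
          rw [hwdef, hX1 i hi]; module
        rw [hrw, norm_comb _ _ hi0l, hinv]
        constructor
        · nlinarith
        · intro _; nlinarith
      · by_cases hik : i = k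
        · have hrw : w - X i = (1/2 - s/4 - 1) • EuclideanSpace.single (⟨0, by omega⟩ : Fin d) (1:ℝ)
              + (s/4) • EuclideanSpace.single l (1:ℝ) := by
            rw [hwdef, hik, hXk]; module
          rw [hrw, norm_comb _ _ hi0l]
          exact ⟨by nlinarith, fun h => absurd h hi⟩
        · have hrw : w - X i = (1/2 - s/4 - s⁻¹) • EuclideanSpace.single (⟨0, by omega⟩ : Fin d) (1:ℝ)
              + (s/4 - s⁻¹) • EuclideanSpace.single l (1:ℝ) := by
            rw [hwdef, hXi i hi hik]; module
          rw [hrw, norm_comb _ _ hi0l, hinv]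
          exact ⟨by nlinarith, fun h => absurd h hi⟩
    apply le_antisymm
    · exact ciSup_le fun i => (hval i).1
    · have h0 : ‖w - X i0‖ ^ 2 = (2 + s) / 4 := (hval i0).2 rfl
      rw [← h0]
      exact le_ciSup (f := fun i : Fin n => ‖w - X i‖ ^ 2)
        (Set.Finite.bddAbove (Set.finite_range _)) i0
  · intro w
    have hd1 : X k - X i0 = (1 + s⁻¹) • EuclideanSpace.single (⟨0, by omega⟩ : Fin d) (1:ℝ)
        + (-s⁻¹) • EuclideanSpace.single l (1:ℝ) := by
      rw [hXk, hX1 i0 rfl]; module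
    have hnd : ‖X k - X i0‖ ^ 2 = 2 + s := by
      rw [hd1, norm_comb _ _ hi0l, hinv]; nlinarith
    have htri : ‖X k - X i0‖ ≤ ‖w - X i0‖ + ‖w - X k‖ := by
      calc ‖X k - X i0‖ = ‖(w - X i0) - (w - X k)‖ := by congr 1; abel
        _ ≤ ‖w - X i0‖ + ‖w - X k‖ := norm_sub_le _ _
    have hsum : (2 + s) / 2 ≤ ‖w - X i0‖ ^ 2 + ‖w - X k‖ ^ 2 :=
      aux_sq s _ _ _ (norm_nonneg _) (norm_nonneg _) (norm_nonneg _) hnd htri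
    have hbdd : BddAbove (Set.range fun i : Fin n => ‖w - X i‖ ^ 2) :=
      Set.Finite.bddAbove (Set.finite_range _)
    rcases le_or_gt ((2 + s) / 4) (‖w - X i0‖ ^ 2) with h | h
    · exact le_trans h (le_ciSup hbdd i0)
    · have : (2 + s) / 4 ≤ ‖w - X k‖ ^ 2 := by linarith
      exact le_trans this (le_ciSup hbdd k)
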